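/- arXiv:2303.03893 — 4 statements merged into one kernel-verified Lean document; each statement's English description precedes it below -/
import Mathlib

section
/- For any density operator ρ on ℂ² and any density operator ω on ℂ², the quantum switch channel with Alice and Bob's measurement channels, restricted to terms where i and j come from the same basis (either {0,1} or {+,−}) and renormalized, equals ∑_{i∈{0,1,+,−}} A_i ρ A_i† ⊗ ω. In particular, the control state ω is left invariant. -/
open Matrix Kronecker Complex Real ComplexOrder

noncomputable section

def ket0 : Fin 2 → ℂ := ![1, 0]
def ket1 : Fin 2 → ℂ := ![0, 1]
def ketP : Fin 2 → ℂ := ((Real.sqrt 2 : ℝ) : ℂ)⁻¹ • (ket0 + ket1)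
def ketM : Fin 2 → ℂ := ((Real.sqrt 2 : ℝ) : ℂ)⁻¹ • (ket0 - ket1)

/-- |v⟩⟨v| -/
def proj (v : Fin 2 → ℂ) : Matrix (Fin 2) (Fin 2) ℂ := Matrix.vecMulVec v (star v)

/-- Measurement Kraus operator (1/√2)|v⟩⟨v|. -/
def K (v : Fin 2 → ℂ) : Matrix (Fin 2) (Fin 2) ℂ := ((Real.sqrt 2 : ℝ) : ℂ)⁻¹ • proj v

def σx : Matrix (Fin 2) (Fin 2) ℂ := !![0, 1; 1, 0]
def σy : Matrix (Fin 2) (Fin 2) ℂ := !![0, -Complex.I; Complex.I, 0]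
def σz : Matrix (Fin 2) (Fin 2) ℂ := !![1, 0; 0, -1]

/-- Pauli family σ_0 = 𝟙, σ_1 = σ_x, σ_2 = σ_y, σ_3 = σ_z. -/
def σ : Fin 4 → Matrix (Fin 2) (Fin 2) ℂ := ![1, σx, σy, σz]

def Akraus : Fin 4 → Matrix (Fin 2) (Fin 2) ℂ := ![K ket0, K ket1, K ketP, K ketM]

/-- Switch Kraus operators with B = A. -/
def Sw (i j : Fin 4) : Matrix (Fin 2 × Fin 2) (Fin 2 × Fin 2) ℂ :=
  (Akraus i * Akraus j) ⊗ₖ proj ket0 + (Akraus j * Akraus i) ⊗ₖ proj ket1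

/-- The two measurement bases: {0,1} and {+,−}. -/
def bases : Finset (Finset (Fin 4)) := {{0, 1}, {2, 3}}

lemma s_mul : ((Real.sqrt 2 : ℝ) : ℂ)⁻¹ * ((Real.sqrt 2 : ℝ) : ℂ)⁻¹ = 2⁻¹ := by
  rw [← mul_inv]
  norm_cast
  rw [Real.mul_self_sqrt (by norm_num)]
  push_cast
  norm_num

lemma star_s : star (((Real.sqrt 2 : ℝ) : ℂ)⁻¹) = ((Real.sqrt 2 : ℝ) : ℂ)⁻¹ := by
  simp

lemma hP01 : proj ket0 + proj ket1 = (1 : Matrix (Fin 2) (Fin 2) ℂ) := by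
  ext i j
  fin_cases i <;> fin_cases j <;>
    simp [proj, ket0, ket1, Matrix.vecMulVec_apply, Matrix.one_apply, -Matrix.cons_vecMulVec]

lemma hAA (i : Fin 4) : Akraus i * Akraus i = ((Real.sqrt 2 : ℝ) : ℂ)⁻¹ • Akraus i := by
  have hs2 : (Real.sqrt 2)^2 = 2 := Real.sq_sqrt (by norm_num)
  have p6 : (Real.sqrt 2)^6 = 8 := by
    calc (Real.sqrt 2)^6 = ((Real.sqrt 2)^2)^3 := by ring
    _ = 8 := by rw [hs2]; norm_num
  have p4 : (Real.sqrt 2)^4 = 4 := by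
    calc (Real.sqrt 2)^4 = ((Real.sqrt 2)^2)^2 := by ring
    _ = 4 := by rw [hs2]; norm_num
  fin_cases i <;> ext a b <;> fin_cases a <;> fin_cases b <;>
    simp [Akraus, K, proj, ketP, ketM, ket0, ket1, Matrix.mul_apply, Fin.sum_univ_two,
      Matrix.vecMulVec_apply, map_inv₀, Complex.conj_ofReal, -Matrix.cons_vecMulVec] <;>
    ring_nf <;> norm_num [← Complex.ofReal_pow, p6, p4]

lemma h01 : Akraus 0 * Akraus 1 = 0 := by
  ext a b
  fin_cases a <;> fin_cases b <;>
    simp [Akraus, K, proj, ket0, ket1, Matrix.mul_apply, Fin.sum_univ_two,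
      Matrix.vecMulVec_apply, -Matrix.cons_vecMulVec]

lemma h10 : Akraus 1 * Akraus 0 = 0 := by
  ext a b
  fin_cases a <;> fin_cases b <;>
    simp [Akraus, K, proj, ket0, ket1, Matrix.mul_apply, Fin.sum_univ_two,
      Matrix.vecMulVec_apply, -Matrix.cons_vecMulVec]

lemma h23 : Akraus 2 * Akraus 3 = 0 := by
  ext a b
  fin_cases a <;> fin_cases b <;>
    simp [Akraus, K, proj, ketP, ketM, ket0, ket1, Matrix.mul_apply, Fin.sum_univ_two,
      Matrix.vecMulVec_apply, map_inv₀, Complex.conj_ofReal, -Matrix.cons_vecMulVec] <;> try ring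

lemma h32 : Akraus 3 * Akraus 2 = 0 := by
  ext a b
  fin_cases a <;> fin_cases b <;>
    simp [Akraus, K, proj, ketP, ketM, ket0, ket1, Matrix.mul_apply, Fin.sum_univ_two,
      Matrix.vecMulVec_apply, map_inv₀, Complex.conj_ofReal, -Matrix.cons_vecMulVec] <;> try ring

lemma kron_conjT (A B : Matrix (Fin 2) (Fin 2) ℂ) :
    (A ⊗ₖ B)ᴴ = Aᴴ ⊗ₖ Bᴴ := by
  ext ⟨i, j⟩ ⟨k, l⟩
  simp [Matrix.conjTranspose_apply, Matrix.kroneckerMap_apply]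

lemma swDiag (i : Fin 4) :
    Sw i i = ((Real.sqrt 2 : ℝ) : ℂ)⁻¹ • (Akraus i ⊗ₖ (1 : Matrix (Fin 2) (Fin 2) ℂ)) := by
  rw [Sw, ← Matrix.kronecker_add, hP01, hAA i, Matrix.smul_kronecker]

lemma sw01 : Sw 0 1 = 0 := by rw [Sw, h01, h10, Matrix.zero_kronecker, Matrix.zero_kronecker, add_zero]
lemma sw10 : Sw 1 0 = 0 := by rw [Sw, h01, h10, Matrix.zero_kronecker, Matrix.zero_kronecker, add_zero]
lemma sw23 : Sw 2 3 = 0 := by rw [Sw, h23, h32, Matrix.zero_kronecker, Matrix.zero_kronecker, add_zero]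
lemma sw32 : Sw 3 2 = 0 := by rw [Sw, h23, h32, Matrix.zero_kronecker, Matrix.zero_kronecker, add_zero]

lemma term (ρ ω : Matrix (Fin 2) (Fin 2) ℂ) (i : Fin 4) :
    Sw i i * (ρ ⊗ₖ ω) * (Sw i i)ᴴ
      = (2 : ℂ)⁻¹ • ((Akraus i * ρ * (Akraus i)ᴴ) ⊗ₖ ω) := by
  rw [swDiag, Matrix.conjTranspose_smul, star_s, kron_conjT, Matrix.conjTranspose_one,
    Matrix.smul_mul, Matrix.smul_mul, Matrix.mul_smul, smul_smul, s_mul,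
    ← Matrix.mul_kronecker_mul, ← Matrix.mul_kronecker_mul, one_mul, mul_one]


/-- the sifted, renormalized switch output is ∑ A_i ρ A_i† ⊗ ω;
in particular the control state ω is unchanged. -/
theorem stmt3 (ρ ω : Matrix (Fin 2) (Fin 2) ℂ)
    (hρ : ρ.PosSemidef) (hρtr : ρ.trace = 1)
    (hω : ω.PosSemidef) (hωtr : ω.trace = 1) :
    (2 : ℂ) • ∑ 𝔅 ∈ bases, ∑ i ∈ 𝔅, ∑ j ∈ 𝔅, Sw i j * (ρ ⊗ₖ ω) * (Sw i j)ᴴ =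
      ∑ i : Fin 4, (Akraus i * ρ * (Akraus i)ᴴ) ⊗ₖ ω := by
  have hb : bases = {{0, 1}, {2, 3}} := rfl
  rw [hb]
  simp only [Finset.sum_pair (show ({0, 1} : Finset (Fin 4)) ≠ {2, 3} by decide),
    Finset.sum_pair (show (0 : Fin 4) ≠ 1 by decide),
    Finset.sum_pair (show (2 : Fin 4) ≠ 3 by decide)]
  rw [sw01, sw10, sw23, sw32]
  simp only [Matrix.zero_mul, Matrix.mul_zero, Matrix.conjTranspose_zero, add_zero, zero_add]
  rw [term, term, term, term, Fin.sum_univ_four]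
  rw [← smul_add, ← smul_add, ← smul_add, smul_smul]
  norm_num
  abel
end
end

section
/- If Eve's probe state ξ on ℂ² satisfies ⟨1|ξ|1⟩ = 0 (so ξ = |0⟩⟨0|), then the two possible returned states are ξ_z = |0⟩⟨0| and ξ_x = 𝟙/2, and the unambiguous discrimination POVM {π_z = α ξ_x^⊥, π_x = β ξ_z^⊥, π_? = 𝟙 − π_z − π_x} forces π_z = 0 and π_x = β|1⟩⟨1|; minimizing the inconclusive probability gives β = 1, and the probability of conclusively identifying the x-basis (assuming Bob picks it with probability 1/2) is 1/4. -/
open Matrix Kronecker Complex Real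

noncomputable section

open ComplexOrder

lemma psd_diag_nonneg {M : Matrix (Fin 2) (Fin 2) ℂ} (h : M.PosSemidef) (i : Fin 2) :
    0 ≤ M i i := by
  have := h.dotProduct_mulVec_nonneg (Pi.single i 1)
  simpa [Matrix.mulVec_single, dotProduct, Pi.single_apply, Finset.sum_ite_eq',
    mul_comm] using this

lemma psd_offdiag {M : Matrix (Fin 2) (Fin 2) ℂ} (h : M.PosSemidef) (i : Fin 2)
    (hi : M i i = 0) (j : Fin 2) : M i j = 0 ∧ M j i = 0 := by
  open scoped MatrixOrder in
  obtain ⟨B, hB⟩ := CStarAlgebra.nonneg_iff_eq_star_mul_self.mp h.nonneg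
  rw [Matrix.star_eq_conjTranspose] at hB; subst hB
  have h0 : (Complex.normSq (B 0 i) : ℝ) + Complex.normSq (B 1 i) = 0 := by
    have h1 : ((Complex.normSq (B 0 i) : ℂ)) + Complex.normSq (B 1 i) = 0 := by
      rw [Complex.normSq_eq_conj_mul_self, Complex.normSq_eq_conj_mul_self]
      simpa [Matrix.mul_apply, Matrix.conjTranspose_apply, Fin.sum_univ_two] using hi
    exact_mod_cast h1
  have hB0 : B 0 i = 0 := Complex.normSq_eq_zero.mp
    (le_antisymm (by nlinarith [Complex.normSq_nonneg (B 1 i)]) (Complex.normSq_nonneg (B 0 i)))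
  have hB1 : B 1 i = 0 := Complex.normSq_eq_zero.mp
    (le_antisymm (by nlinarith [Complex.normSq_nonneg (B 0 i)]) (Complex.normSq_nonneg (B 1 i)))
  constructor <;> simp [Matrix.mul_apply, Matrix.conjTranspose_apply, Fin.sum_univ_two, hB0, hB1]

/-- analysis of Eve's probe state ξ with ⟨1|ξ|1⟩ = 0 in the two-way
definite-causal protocol: ξ = |0⟩⟨0|, ξ_z = |0⟩⟨0|, ξ_x = 𝟙/2, the unambiguous
discrimination POVM is forced to have π_z = 0 and π_x = β|1⟩⟨1| with β ≤ 1,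
and at the optimum β = 1 the conclusive x-identification probability is 1/4. -/
theorem stmt13 (ξ : Matrix (Fin 2) (Fin 2) ℂ)
    (hpsd : ξ.PosSemidef) (htr : ξ.trace = 1) (h11 : ξ 1 1 = 0)
    (ξz ξx : Matrix (Fin 2) (Fin 2) ℂ)
    (hz : ξz = ξ 0 0 • proj ket0 + ξ 1 1 • proj ket1)
    (hx : ξx = (star ketP ⬝ᵥ ξ.mulVec ketP) • proj ketP +
               (star ketM ⬝ᵥ ξ.mulVec ketM) • proj ketM) :
    ξ = proj ket0 ∧
    ξz = proj ket0 ∧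
    ξx = (1/2 : ℂ) • (1 : Matrix (Fin 2) (Fin 2) ℂ) ∧
    (∀ T : Matrix (Fin 2) (Fin 2) ℂ, T.PosSemidef → (T * ξx).trace = 0 → T = 0) ∧
    (∀ T : Matrix (Fin 2) (Fin 2) ℂ, T.PosSemidef → (T * ξz).trace = 0 →
      ∃ t : ℝ, 0 ≤ t ∧ T = (t : ℂ) • proj ket1) ∧
    (∀ β : ℝ, 0 ≤ β →
      (((1 : Matrix (Fin 2) (Fin 2) ℂ) - (β : ℂ) • proj ket1).PosSemidef ↔ β ≤ 1)) ∧
    (1/2 : ℂ) * ((((1 : ℝ) : ℂ) • proj ket1 * ξx)).trace = 1/4 := by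
  have h00 : ξ 0 0 = 1 := by
    have := htr; rw [Matrix.trace_fin_two, h11, add_zero] at this; exact this
  have h01 : ξ 0 1 = 0 := (psd_offdiag hpsd 1 h11 0).2
  have h10 : ξ 1 0 = 0 := (psd_offdiag hpsd 1 h11 0).1
  have hξ : ξ = proj ket0 := by
    ext i j; fin_cases i <;> fin_cases j <;>
      simp [proj, Matrix.vecMulVec_apply, ket0, h00, h01, h10, h11]
  have hξz : ξz = proj ket0 := by
    rw [hz, h00, h11]; simp
  have hξx : ξx = (1/2 : ℂ) • (1 : Matrix (Fin 2) (Fin 2) ℂ) := by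
    have h2 : ((Real.sqrt 2 : ℝ) : ℂ) * ((Real.sqrt 2 : ℝ) : ℂ) = 2 := by
      norm_cast; exact Real.mul_self_sqrt (by norm_num)
    have h2ne : ((Real.sqrt 2 : ℝ) : ℂ) ≠ 0 := by
      intro h; rw [h] at h2; simp at h2
    rw [hx, hξ]
    ext i j
    fin_cases i <;> fin_cases j <;>
      simp [proj, Matrix.vecMulVec_apply, ketP, ketM, ket0, ket1, Matrix.mulVec,
        dotProduct, Fin.sum_univ_two, Matrix.one_apply, Complex.ext_iff, -Matrix.cons_vecMulVec, -Matrix.vecMulVec_cons] <;>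
      field_simp <;> ring_nf <;>
      norm_num [show √2 ^ 4 = 4 by rw [show (4:ℕ) = 2 * 2 by norm_num, pow_mul]; norm_num [Real.sq_sqrt]]
  refine ⟨hξ, hξz, hξx, ?_, ?_, ?_, ?_⟩
  · -- π_z must vanish
    intro T hT htr0
    rw [hξx] at htr0
    have htrT : T.trace = 0 := by
      rw [Matrix.mul_smul, Matrix.mul_one, Matrix.trace_smul] at htr0
      have : (1/2 : ℂ) ≠ 0 := by norm_num
      simpa [smul_eq_mul, this] using htr0
    rw [Matrix.trace_fin_two] at htrT
    have hT00 : T 0 0 = 0 :=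
      ((add_eq_zero_iff_of_nonneg (psd_diag_nonneg hT 0) (psd_diag_nonneg hT 1)).mp htrT).1
    have hT11 : T 1 1 = 0 :=
      ((add_eq_zero_iff_of_nonneg (psd_diag_nonneg hT 0) (psd_diag_nonneg hT 1)).mp htrT).2
    have h01' := (psd_offdiag hT 0 hT00 1).1
    have h10' := (psd_offdiag hT 0 hT00 1).2
    ext i j; fin_cases i <;> fin_cases j <;> simp [hT00, hT11, h01', h10']
  · -- π_x must be β|1⟩⟨1|
    intro T hT htr0
    rw [hξz] at htr0
    have hT00 : T 0 0 = 0 := by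
      have : (T * proj ket0).trace = T 0 0 := by
        simp [Matrix.trace_fin_two, Matrix.mul_apply, Fin.sum_univ_two, proj,
          Matrix.vecMulVec_apply, ket0, -Matrix.cons_vecMulVec, -Matrix.vecMulVec_cons]
      rw [this] at htr0; exact htr0
    have h01' := (psd_offdiag hT 0 hT00 1).1
    have h10' := (psd_offdiag hT 0 hT00 1).2
    have hT11 := psd_diag_nonneg hT 1
    rw [Complex.le_def] at hT11
    refine ⟨(T 1 1).re, by simpa using hT11.1, ?_⟩
    ext i j; fin_cases i <;> fin_cases j <;>
      simp [hT00, h01', h10', proj, Matrix.vecMulVec_apply, ket1, Complex.ext_iff,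
        ← hT11.2, -Matrix.cons_vecMulVec, -Matrix.vecMulVec_cons]
  · -- positivity constraint on β
    intro β hβ
    constructor
    · intro h
      have := psd_diag_nonneg h 1
      have h1 : ((1 : Matrix (Fin 2) (Fin 2) ℂ) - (β : ℂ) • proj ket1) 1 1 = ((1 - β : ℝ) : ℂ) := by
        simp [Matrix.one_apply, proj, Matrix.vecMulVec_apply, ket1, -Matrix.cons_vecMulVec, -Matrix.vecMulVec_cons]
      rw [h1] at this
      have : (0:ℝ) ≤ 1 - β := by exact_mod_cast this
      linarith
    · intro h
      have hd : (1 : Matrix (Fin 2) (Fin 2) ℂ) - (β : ℂ) • proj ket1 =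
          Matrix.diagonal ![1, ((1 - β : ℝ) : ℂ)] := by
        ext i j; fin_cases i <;> fin_cases j <;>
          simp [Matrix.one_apply, proj, Matrix.vecMulVec_apply, ket1, Matrix.diagonal, -Matrix.cons_vecMulVec, -Matrix.vecMulVec_cons]
      rw [hd]
      refine Matrix.posSemidef_diagonal_iff.mpr ?_
      intro i; fin_cases i
      · simp
      · show (0:ℂ) ≤ ((1 - β : ℝ) : ℂ)
        exact_mod_cast sub_nonneg.mpr h
  · -- conclusive probability 1/4
    rw [hξx]
    simp [Matrix.trace_fin_two, Matrix.mul_apply, Fin.sum_univ_two, proj,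
      Matrix.vecMulVec_apply, ket1, Matrix.one_apply, Matrix.vecHead, Matrix.vecTail, Pi.star_apply, -Matrix.cons_vecMulVec, -Matrix.vecMulVec_cons]
    norm_num
end
end

section
/- Let Z be an operator on ℂ²⊗ℂ² such that for all i, j from the same basis ({0,1} or {+,−}), all m ∈ {0,1}, and all |ψ⟩ = α|0⟩ + β|1⟩ with α, β ≠ 0, the quantity ∑_{n∈{0,1}} (⟨n|⟨m|(B_j ⊗ A_i)Z|ψ⟩|n⟩ − ⟨m|⟨n|Z(B_j ⊗ A_i)|n⟩|ψ⟩) vanishes. Then Z = ∑_{μ=0}^{3} r^μ σ_μ ⊗ σ_μ for some complex numbers r^0, r^1, r^2, r^3. Conversely, any Z of this form satisfies the vanishing condition for all such i, j, m, ψ. -/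
open Matrix Kronecker Complex Real

noncomputable section

/-- Tensor product of two single-qubit vectors. -/
def tens (u v : Fin 2 → ℂ) : Fin 2 × Fin 2 → ℂ := fun p => u p.1 * v p.2

/-- Computational basis vectors. -/
def e (n : Fin 2) : Fin 2 → ℂ := Pi.single n 1


lemma hc2 : (((Real.sqrt 2 : ℝ) : ℂ))⁻¹ ^ 2 = 1/2 := by
  rw [← Complex.ofReal_inv, ← Complex.ofReal_pow]; norm_num [Real.sq_sqrt]
lemma KK (u v : Fin 2 → ℂ) : K u ⊗ₖ K v = (1/2 : ℂ) • (proj u ⊗ₖ proj v) := by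
  rw [K, K, Matrix.smul_kronecker, Matrix.kronecker_smul, smul_smul, ← sq, hc2]
lemma projP : proj ketP = (1/2 : ℂ) • !![1,1;1,1] := by
  rw [ketP, proj]; ext i j
  fin_cases i <;> fin_cases j <;>
    simp [vecMulVec_apply, ket0, ket1, Complex.ext_iff] <;>
    norm_num [← Complex.ofReal_pow, Real.sq_sqrt, Real.sqrt_nonneg] <;>
    rw [div_mul_div_comm, Real.mul_self_sqrt (by norm_num)] <;> norm_num
lemma projM : proj ketM = (1/2 : ℂ) • !![1,-1;-1,1] := by
  rw [ketM, proj]; ext i j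
  fin_cases i <;> fin_cases j <;>
    simp [vecMulVec_apply, ket0, ket1, Complex.ext_iff] <;>
    norm_num [← Complex.ofReal_pow, Real.sq_sqrt, Real.sqrt_nonneg] <;>
    rw [div_mul_div_comm, Real.mul_self_sqrt (by norm_num)] <;> norm_num
lemma proj0 : proj ket0 = !![1,0;0,0] := by
  rw [proj]; ext i j; fin_cases i <;> fin_cases j <;> simp [vecMulVec_apply, ket0]
lemma proj1 : proj ket1 = !![0,0;0,1] := by
  rw [proj]; ext i j; fin_cases i <;> fin_cases j <;> simp [vecMulVec_apply, ket1]

lemma ket00 : ket0 0 = 1 := rfl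
lemma ket01 : ket0 1 = 0 := rfl
lemma ket10 : ket1 0 = 0 := rfl
lemma ket11 : ket1 1 = 1 := rfl

lemma sum1 (P Q : Matrix (Fin 2) (Fin 2) ℂ) (m : Fin 2) (ψ : Fin 2 → ℂ) :
    ∑ n : Fin 2, star (tens (e n) (e m)) ⬝ᵥ ((P ⊗ₖ Q).mulVec (tens ψ (e n)))
      = (Q * P).mulVec ψ m := by
  fin_cases m <;>
  simp [Matrix.mul_apply, Matrix.mulVec, dotProduct, Fintype.sum_prod_type,
    Fin.sum_univ_two, tens, e, Pi.single_apply, Matrix.kroneckerMap_apply] <;> ring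

lemma sum2 (A B : Matrix (Fin 2) (Fin 2) ℂ) (m : Fin 2) (ψ : Fin 2 → ℂ) :
    ∑ n : Fin 2, star (tens (e m) (e n)) ⬝ᵥ ((A ⊗ₖ B).mulVec (tens (e n) ψ))
      = (A * B).mulVec ψ m := by
  fin_cases m <;>
  simp [Matrix.mul_apply, Matrix.mulVec, dotProduct, Fintype.sum_prod_type,
    Fin.sum_univ_two, tens, e, Pi.single_apply, Matrix.kroneckerMap_apply] <;> ring
lemma commP (b : Fin 2 → (Fin 2 → ℂ)) (hb : b = ![ket0, ket1] ∨ b = ![ketP, ketM])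
    (i j : Fin 2) (μ : Fin 4) :
    proj (b i) * σ μ * (proj (b j) * σ μ) = σ μ * proj (b j) * (σ μ * proj (b i)) := by
  rcases hb with rfl | rfl <;> fin_cases i <;> fin_cases j <;> fin_cases μ <;>
  · simp only [σ, Fin.zero_eta, Fin.mk_one, proj0, proj1, projP, projM,
      Matrix.smul_mul, Matrix.mul_smul, smul_smul,
      Matrix.cons_val_zero, Matrix.cons_val_one, Matrix.head_cons, Matrix.cons_val',
      Matrix.cons_val_fin_one, Matrix.empty_val', Matrix.head_fin_const]
    norm_num [Matrix.mul_fin_two, σx, σy, σz] <;>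
      simp [funext_iff, Fin.forall_fin_two]

lemma commK (b : Fin 2 → (Fin 2 → ℂ)) (hb : b = ![ket0, ket1] ∨ b = ![ketP, ketM])
    (i j : Fin 2) (μ : Fin 4) :
    (K (b i) * σ μ) * (K (b j) * σ μ) = (σ μ * K (b j)) * (σ μ * K (b i)) := by
  simp only [K, Matrix.smul_mul, Matrix.mul_smul, smul_smul]
  rw [commP b hb i j μ]


lemma sum_mulVec {ι : Type*} (s : Finset ι) (f : ι → Matrix (Fin 2 × Fin 2) (Fin 2 × Fin 2) ℂ)
    (v : Fin 2 × Fin 2 → ℂ) : (∑ i ∈ s, f i) *ᵥ v = ∑ i ∈ s, f i *ᵥ v := by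
  ext x
  simp only [Matrix.mulVec, dotProduct, Matrix.sum_apply, Finset.sum_apply,
    Finset.sum_mul]
  rw [Finset.sum_comm]

lemma dot_sum {ι : Type*} (s : Finset ι) (u : Fin 2 × Fin 2 → ℂ)
    (w : ι → (Fin 2 × Fin 2 → ℂ)) : u ⬝ᵥ (∑ i ∈ s, w i) = ∑ i ∈ s, u ⬝ᵥ w i := by
  simp only [dotProduct, Finset.sum_apply, Finset.mul_sum]
  rw [Finset.sum_comm]

lemma reverse (Z : Matrix (Fin 2 × Fin 2) (Fin 2 × Fin 2) ℂ) (r : Fin 4 → ℂ)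
    (hZ : Z = ∑ μ : Fin 4, r μ • (σ μ ⊗ₖ σ μ))
    (b : Fin 2 → (Fin 2 → ℂ)) (hb : b = ![ket0, ket1] ∨ b = ![ketP, ketM])
    (i j m : Fin 2) (ψ : Fin 2 → ℂ) :
    (∑ n : Fin 2,
          (star (tens (e n) (e m)) ⬝ᵥ
              ((K (b j) ⊗ₖ K (b i) * Z).mulVec (tens ψ (e n)))
           - star (tens (e m) (e n)) ⬝ᵥ
              ((Z * (K (b j) ⊗ₖ K (b i))).mulVec (tens (e n) ψ))))
          = 0 := by
  have hμ : ∀ μ : Fin 4, (∑ n : Fin 2,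
      (star (tens (e n) (e m)) ⬝ᵥ
          ((K (b j) ⊗ₖ K (b i) * (σ μ ⊗ₖ σ μ)).mulVec (tens ψ (e n)))
       - star (tens (e m) (e n)) ⬝ᵥ
          (((σ μ ⊗ₖ σ μ) * (K (b j) ⊗ₖ K (b i))).mulVec (tens (e n) ψ)))) = 0 := by
    intro μ
    rw [Finset.sum_sub_distrib, ← Matrix.mul_kronecker_mul, ← Matrix.mul_kronecker_mul,
      sum1, sum2, commK b hb i j μ, sub_self]
  subst hZ
  simp only [Matrix.mul_sum, Matrix.sum_mul, Matrix.mul_smul, Matrix.smul_mul,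
    sum_mulVec, Matrix.smul_mulVec, dot_sum, dotProduct_smul,
    ← Finset.sum_sub_distrib, ← smul_sub, smul_eq_mul]
  rw [Finset.sum_comm]
  refine Finset.sum_eq_zero fun μ _ => ?_
  simp only [← mul_sub]
  rw [← Finset.mul_sum, hμ μ, mul_zero]

lemma expand (W Z : Matrix (Fin 2 × Fin 2) (Fin 2 × Fin 2) ℂ) (m : Fin 2) (ψ : Fin 2 → ℂ) :
    (∑ n : Fin 2,
      (star (tens (e n) (e m)) ⬝ᵥ ((W * Z).mulVec (tens ψ (e n)))
       - star (tens (e m) (e n)) ⬝ᵥ ((Z * W).mulVec (tens (e n) ψ))))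
    = ∑ n : Fin 2, ∑ p : Fin 2 × Fin 2,
        ((∑ q : Fin 2, W (n, m) p * Z p (q, n) * ψ q)
         - (∑ q : Fin 2, Z (m, n) p * W p (n, q) * ψ q)) := by
  fin_cases m <;>
  · simp [Matrix.mul_apply, Matrix.mulVec, dotProduct, Fintype.sum_prod_type,
      Fin.sum_univ_two, tens, e, Pi.single_apply]
    ring

set_option maxHeartbeats 4000000 in
/-- Theorem 1 of the paper: the eavesdroppers' joint operation Z goes
undetected (the stated sums vanish for all same-basis i, j, all m, and all |ψ⟩ with
α, β ≠ 0) iff Z = ∑_μ r^μ σ_μ ⊗ σ_μ. -/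
theorem stmt16 (Z : Matrix (Fin 2 × Fin 2) (Fin 2 × Fin 2) ℂ) :
    (∀ b : Fin 2 → (Fin 2 → ℂ), (b = ![ket0, ket1] ∨ b = ![ketP, ketM]) →
      ∀ i j m : Fin 2, ∀ α β : ℂ, α ≠ 0 → β ≠ 0 →
        (∑ n : Fin 2,
          (star (tens (e n) (e m)) ⬝ᵥ
              ((K (b j) ⊗ₖ K (b i) * Z).mulVec (tens (α • ket0 + β • ket1) (e n)))
           - star (tens (e m) (e n)) ⬝ᵥ
              ((Z * (K (b j) ⊗ₖ K (b i))).mulVec (tens (e n) (α • ket0 + β • ket1)))))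
          = 0) ↔
    ∃ r : Fin 4 → ℂ, Z = ∑ μ : Fin 4, r μ • (σ μ ⊗ₖ σ μ) := by
  constructor
  · intro h
    have E0101M := h ![ket0, ket1] (Or.inl rfl) 1 0 1 1 (-1) one_ne_zero (by norm_num)
    rw [KK, expand] at E0101M
    simp only [Fintype.sum_prod_type, Fin.sum_univ_two, projP, projM, proj0, proj1,
      Matrix.kroneckerMap_apply, Matrix.smul_apply, smul_eq_mul, Matrix.cons_val',
      Matrix.cons_val_zero, Matrix.cons_val_one, Matrix.head_cons, Matrix.head_fin_const,
      Matrix.empty_val', Matrix.cons_val_fin_one, Pi.add_apply, Pi.smul_apply,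
      ket00, ket01, ket10, ket11, Prod.mk_zero_zero, Prod.mk_one_one, Matrix.of_apply] at E0101M

    have E0101P := h ![ket0, ket1] (Or.inl rfl) 1 0 1 1 1 one_ne_zero one_ne_zero
    rw [KK, expand] at E0101P
    simp only [Fintype.sum_prod_type, Fin.sum_univ_two, projP, projM, proj0, proj1,
      Matrix.kroneckerMap_apply, Matrix.smul_apply, smul_eq_mul, Matrix.cons_val',
      Matrix.cons_val_zero, Matrix.cons_val_one, Matrix.head_cons, Matrix.head_fin_const,
      Matrix.empty_val', Matrix.cons_val_fin_one, Pi.add_apply, Pi.smul_apply,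
      ket00, ket01, ket10, ket11, Prod.mk_zero_zero, Prod.mk_one_one, Matrix.of_apply] at E0101P

    have E0110M := h ![ket0, ket1] (Or.inl rfl) 1 1 0 1 (-1) one_ne_zero (by norm_num)
    rw [KK, expand] at E0110M
    simp only [Fintype.sum_prod_type, Fin.sum_univ_two, projP, projM, proj0, proj1,
      Matrix.kroneckerMap_apply, Matrix.smul_apply, smul_eq_mul, Matrix.cons_val',
      Matrix.cons_val_zero, Matrix.cons_val_one, Matrix.head_cons, Matrix.head_fin_const,
      Matrix.empty_val', Matrix.cons_val_fin_one, Pi.add_apply, Pi.smul_apply,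
      ket00, ket01, ket10, ket11, Prod.mk_zero_zero, Prod.mk_one_one, Matrix.of_apply] at E0110M

    have E0110P := h ![ket0, ket1] (Or.inl rfl) 1 1 0 1 1 one_ne_zero one_ne_zero
    rw [KK, expand] at E0110P
    simp only [Fintype.sum_prod_type, Fin.sum_univ_two, projP, projM, proj0, proj1,
      Matrix.kroneckerMap_apply, Matrix.smul_apply, smul_eq_mul, Matrix.cons_val',
      Matrix.cons_val_zero, Matrix.cons_val_one, Matrix.head_cons, Matrix.head_fin_const,
      Matrix.empty_val', Matrix.cons_val_fin_one, Pi.add_apply, Pi.smul_apply,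
      ket00, ket01, ket10, ket11, Prod.mk_zero_zero, Prod.mk_one_one, Matrix.of_apply] at E0110P

    have E0111M := h ![ket0, ket1] (Or.inl rfl) 1 1 1 1 (-1) one_ne_zero (by norm_num)
    rw [KK, expand] at E0111M
    simp only [Fintype.sum_prod_type, Fin.sum_univ_two, projP, projM, proj0, proj1,
      Matrix.kroneckerMap_apply, Matrix.smul_apply, smul_eq_mul, Matrix.cons_val',
      Matrix.cons_val_zero, Matrix.cons_val_one, Matrix.head_cons, Matrix.head_fin_const,
      Matrix.empty_val', Matrix.cons_val_fin_one, Pi.add_apply, Pi.smul_apply,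
      ket00, ket01, ket10, ket11, Prod.mk_zero_zero, Prod.mk_one_one, Matrix.of_apply] at E0111M

    have E0111P := h ![ket0, ket1] (Or.inl rfl) 1 1 1 1 1 one_ne_zero one_ne_zero
    rw [KK, expand] at E0111P
    simp only [Fintype.sum_prod_type, Fin.sum_univ_two, projP, projM, proj0, proj1,
      Matrix.kroneckerMap_apply, Matrix.smul_apply, smul_eq_mul, Matrix.cons_val',
      Matrix.cons_val_zero, Matrix.cons_val_one, Matrix.head_cons, Matrix.head_fin_const,
      Matrix.empty_val', Matrix.cons_val_fin_one, Pi.add_apply, Pi.smul_apply,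
      ket00, ket01, ket10, ket11, Prod.mk_zero_zero, Prod.mk_one_one, Matrix.of_apply] at E0111P

    have E1001M := h ![ketP, ketM] (Or.inr rfl) 0 0 1 1 (-1) one_ne_zero (by norm_num)
    rw [KK, expand] at E1001M
    simp only [Fintype.sum_prod_type, Fin.sum_univ_two, projP, projM, proj0, proj1,
      Matrix.kroneckerMap_apply, Matrix.smul_apply, smul_eq_mul, Matrix.cons_val',
      Matrix.cons_val_zero, Matrix.cons_val_one, Matrix.head_cons, Matrix.head_fin_const,
      Matrix.empty_val', Matrix.cons_val_fin_one, Pi.add_apply, Pi.smul_apply,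
      ket00, ket01, ket10, ket11, Prod.mk_zero_zero, Prod.mk_one_one, Matrix.of_apply] at E1001M

    have E1001P := h ![ketP, ketM] (Or.inr rfl) 0 0 1 1 1 one_ne_zero one_ne_zero
    rw [KK, expand] at E1001P
    simp only [Fintype.sum_prod_type, Fin.sum_univ_two, projP, projM, proj0, proj1,
      Matrix.kroneckerMap_apply, Matrix.smul_apply, smul_eq_mul, Matrix.cons_val',
      Matrix.cons_val_zero, Matrix.cons_val_one, Matrix.head_cons, Matrix.head_fin_const,
      Matrix.empty_val', Matrix.cons_val_fin_one, Pi.add_apply, Pi.smul_apply,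
      ket00, ket01, ket10, ket11, Prod.mk_zero_zero, Prod.mk_one_one, Matrix.of_apply] at E1001P

    have E1011M := h ![ketP, ketM] (Or.inr rfl) 0 1 1 1 (-1) one_ne_zero (by norm_num)
    rw [KK, expand] at E1011M
    simp only [Fintype.sum_prod_type, Fin.sum_univ_two, projP, projM, proj0, proj1,
      Matrix.kroneckerMap_apply, Matrix.smul_apply, smul_eq_mul, Matrix.cons_val',
      Matrix.cons_val_zero, Matrix.cons_val_one, Matrix.head_cons, Matrix.head_fin_const,
      Matrix.empty_val', Matrix.cons_val_fin_one, Pi.add_apply, Pi.smul_apply,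
      ket00, ket01, ket10, ket11, Prod.mk_zero_zero, Prod.mk_one_one, Matrix.of_apply] at E1011M

    have E1011P := h ![ketP, ketM] (Or.inr rfl) 0 1 1 1 1 one_ne_zero one_ne_zero
    rw [KK, expand] at E1011P
    simp only [Fintype.sum_prod_type, Fin.sum_univ_two, projP, projM, proj0, proj1,
      Matrix.kroneckerMap_apply, Matrix.smul_apply, smul_eq_mul, Matrix.cons_val',
      Matrix.cons_val_zero, Matrix.cons_val_one, Matrix.head_cons, Matrix.head_fin_const,
      Matrix.empty_val', Matrix.cons_val_fin_one, Pi.add_apply, Pi.smul_apply,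
      ket00, ket01, ket10, ket11, Prod.mk_zero_zero, Prod.mk_one_one, Matrix.of_apply] at E1011P

    have E1100M := h ![ketP, ketM] (Or.inr rfl) 1 0 0 1 (-1) one_ne_zero (by norm_num)
    rw [KK, expand] at E1100M
    simp only [Fintype.sum_prod_type, Fin.sum_univ_two, projP, projM, proj0, proj1,
      Matrix.kroneckerMap_apply, Matrix.smul_apply, smul_eq_mul, Matrix.cons_val',
      Matrix.cons_val_zero, Matrix.cons_val_one, Matrix.head_cons, Matrix.head_fin_const,
      Matrix.empty_val', Matrix.cons_val_fin_one, Pi.add_apply, Pi.smul_apply,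
      ket00, ket01, ket10, ket11, Prod.mk_zero_zero, Prod.mk_one_one, Matrix.of_apply] at E1100M

    have E1100P := h ![ketP, ketM] (Or.inr rfl) 1 0 0 1 1 one_ne_zero one_ne_zero
    rw [KK, expand] at E1100P
    simp only [Fintype.sum_prod_type, Fin.sum_univ_two, projP, projM, proj0, proj1,
      Matrix.kroneckerMap_apply, Matrix.smul_apply, smul_eq_mul, Matrix.cons_val',
      Matrix.cons_val_zero, Matrix.cons_val_one, Matrix.head_cons, Matrix.head_fin_const,
      Matrix.empty_val', Matrix.cons_val_fin_one, Pi.add_apply, Pi.smul_apply,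
      ket00, ket01, ket10, ket11, Prod.mk_zero_zero, Prod.mk_one_one, Matrix.of_apply] at E1100P

    have E1101M := h ![ketP, ketM] (Or.inr rfl) 1 0 1 1 (-1) one_ne_zero (by norm_num)
    rw [KK, expand] at E1101M
    simp only [Fintype.sum_prod_type, Fin.sum_univ_two, projP, projM, proj0, proj1,
      Matrix.kroneckerMap_apply, Matrix.smul_apply, smul_eq_mul, Matrix.cons_val',
      Matrix.cons_val_zero, Matrix.cons_val_one, Matrix.head_cons, Matrix.head_fin_const,
      Matrix.empty_val', Matrix.cons_val_fin_one, Pi.add_apply, Pi.smul_apply,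
      ket00, ket01, ket10, ket11, Prod.mk_zero_zero, Prod.mk_one_one, Matrix.of_apply] at E1101M

    have E1101P := h ![ketP, ketM] (Or.inr rfl) 1 0 1 1 1 one_ne_zero one_ne_zero
    rw [KK, expand] at E1101P
    simp only [Fintype.sum_prod_type, Fin.sum_univ_two, projP, projM, proj0, proj1,
      Matrix.kroneckerMap_apply, Matrix.smul_apply, smul_eq_mul, Matrix.cons_val',
      Matrix.cons_val_zero, Matrix.cons_val_one, Matrix.head_cons, Matrix.head_fin_const,
      Matrix.empty_val', Matrix.cons_val_fin_one, Pi.add_apply, Pi.smul_apply,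
      ket00, ket01, ket10, ket11, Prod.mk_zero_zero, Prod.mk_one_one, Matrix.of_apply] at E1101P

    have E1111M := h ![ketP, ketM] (Or.inr rfl) 1 1 1 1 (-1) one_ne_zero (by norm_num)
    rw [KK, expand] at E1111M
    simp only [Fintype.sum_prod_type, Fin.sum_univ_two, projP, projM, proj0, proj1,
      Matrix.kroneckerMap_apply, Matrix.smul_apply, smul_eq_mul, Matrix.cons_val',
      Matrix.cons_val_zero, Matrix.cons_val_one, Matrix.head_cons, Matrix.head_fin_const,
      Matrix.empty_val', Matrix.cons_val_fin_one, Pi.add_apply, Pi.smul_apply,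
      ket00, ket01, ket10, ket11, Prod.mk_zero_zero, Prod.mk_one_one, Matrix.of_apply] at E1111M

    have E1111P := h ![ketP, ketM] (Or.inr rfl) 1 1 1 1 1 one_ne_zero one_ne_zero
    rw [KK, expand] at E1111P
    simp only [Fintype.sum_prod_type, Fin.sum_univ_two, projP, projM, proj0, proj1,
      Matrix.kroneckerMap_apply, Matrix.smul_apply, smul_eq_mul, Matrix.cons_val',
      Matrix.cons_val_zero, Matrix.cons_val_one, Matrix.head_cons, Matrix.head_fin_const,
      Matrix.empty_val', Matrix.cons_val_fin_one, Pi.add_apply, Pi.smul_apply,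
      ket00, ket01, ket10, ket11, Prod.mk_zero_zero, Prod.mk_one_one, Matrix.of_apply] at E1111P

    refine ⟨![(Z (0,0) (0,0) + Z (0,1) (0,1))/2, (Z (0,0) (1,1) + Z (0,1) (1,0))/2,
             (Z (0,1) (1,0) - Z (0,0) (1,1))/2, (Z (0,0) (0,0) - Z (0,1) (0,1))/2], ?_⟩
    ext p q
    fin_cases p <;> fin_cases q <;>
      simp [Fin.sum_univ_four, σ, σx, σy, σz, Matrix.sum_apply, Matrix.smul_apply,
        Matrix.kroneckerMap_apply, Matrix.one_apply]
    · ring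
    · linear_combination (1:ℂ) * E0101P + (1:ℂ) * E0101M + (1:ℂ) * E0110P + (-1:ℂ) * E0110M + (1:ℂ) * E0111P + (1:ℂ) * E0111M + (1:ℂ) * E1001P + (-1:ℂ) * E1001M + (1:ℂ) * E1011P + (-1:ℂ) * E1011M + (-2:ℂ) * E1100P + (2:ℂ) * E1100M + (-3:ℂ) * E1101P + (-1:ℂ) * E1101M + (-1:ℂ) * E1111P + (1:ℂ) * E1111M
    · linear_combination (1:ℂ) * E0111P + (1:ℂ) * E0111M + (1:ℂ) * E1001P + (-1:ℂ) * E1001M + (-1:ℂ) * E1011P + (-1:ℂ) * E1011M + (1:ℂ) * E1100P + (-1:ℂ) * E1100M + (-1:ℂ) * E1111P + (1:ℂ) * E1111M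
    · ring
    · linear_combination (1:ℂ) * E0101P + (1:ℂ) * E0101M
    · ring
    · ring
    · linear_combination (-1:ℂ) * E0110P + (1:ℂ) * E0110M
    · linear_combination (-1:ℂ) * E0110P + (1:ℂ) * E0110M + (-1:ℂ) * E1001P + (1:ℂ) * E1001M + (-1:ℂ) * E1011P + (-1:ℂ) * E1011M + (1:ℂ) * E1100P + (-1:ℂ) * E1100M + (1:ℂ) * E1111P + (-1:ℂ) * E1111M
    · linear_combination (-1:ℂ) * E1001P + (1:ℂ) * E1001M + (-1:ℂ) * E1011P + (1:ℂ) * E1011M + (-1:ℂ) * E1101P + (1:ℂ) * E1101M + (-1:ℂ) * E1111P + (1:ℂ) * E1111M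
    · linear_combination (-1:ℂ) * E1001P + (-1:ℂ) * E1001M + (1:ℂ) * E1011P + (1:ℂ) * E1011M + (-1:ℂ) * E1101P + (-1:ℂ) * E1101M + (1:ℂ) * E1111P + (1:ℂ) * E1111M
    · linear_combination (1:ℂ) * E0101P + (1:ℂ) * E0101M + (-1:ℂ) * E1001P + (-1:ℂ) * E1001M + (1:ℂ) * E1011P + (-1:ℂ) * E1011M + (-1:ℂ) * E1100P + (1:ℂ) * E1100M + (-2:ℂ) * E1101P + (-1:ℂ) * E1111P + (-1:ℂ) * E1111M
    · linear_combination (-1:ℂ) * E1001P + (1:ℂ) * E1001M + (1:ℂ) * E1011P + (-1:ℂ) * E1011M + (1:ℂ) * E1101P + (-1:ℂ) * E1101M + (-1:ℂ) * E1111P + (1:ℂ) * E1111M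
    · linear_combination (1:ℂ) * E0111P + (1:ℂ) * E0111M
    · linear_combination (1:ℂ) * E0101P + (1:ℂ) * E0101M + (1:ℂ) * E0110P + (-1:ℂ) * E0110M + (1:ℂ) * E0111P + (1:ℂ) * E0111M + (-2:ℂ) * E1001M + (-1:ℂ) * E1100P + (1:ℂ) * E1100M + (-1:ℂ) * E1101P + (-1:ℂ) * E1101M + (-2:ℂ) * E1111P
    · linear_combination (-1:ℂ) * E1001P + (-1:ℂ) * E1001M + (-1:ℂ) * E1011P + (-1:ℂ) * E1011M + (1:ℂ) * E1101P + (1:ℂ) * E1101M + (1:ℂ) * E1111P + (1:ℂ) * E1111M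

  · rintro ⟨r, rfl⟩ b hb i j m α β hα hβ
    exact reverse _ r rfl b hb i j m _
end
end

section
/- For Z = ∑_{μ=0}^3 r^μ σ_μ ⊗ σ_μ on ℂ²⊗ℂ², A_i = (1/√2)|i⟩⟨i| and B_j = (1/√2)|j⟩⟨j| with i,j ∈ {0,1}, and any unit vector |ψ⟩ ∈ ℂ², the joint probability ⟨f_{ij}|f_{ij}⟩, where |f_{ij}⟩ = ∑_n [(⟨n|⊗𝟙)(B_j⊗A_i)Z|ψ⟩|n⟩|0⟩ + (𝟙⊗⟨n|)Z(B_j⊗A_i)|n⟩|ψ⟩|1⟩], equals (|⟨i|ψ⟩|²/2)(|r^0 + r^3|² δ_{ij} + |r^1 + r^2|² δ_{i j̄}). -/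
open Matrix Kronecker Complex Real

noncomputable section

/-- z-basis Kraus operators A_i = (1/√2)|i⟩⟨i|. -/
def Az (i : Fin 2) : Matrix (Fin 2) (Fin 2) ℂ := K (e i)

/-- Branch of |f_{ij}⟩ with control |0⟩: t ↦ ∑_n ⟨n|⊗𝟙 applied to (B_j⊗A_i)Z|ψ⟩|n⟩. -/
def fv1 (Z : Matrix (Fin 2 × Fin 2) (Fin 2 × Fin 2) ℂ) (i j : Fin 2)
    (ψ : Fin 2 → ℂ) : Fin 2 → ℂ :=
  fun t => ∑ n : Fin 2, ((Az j ⊗ₖ Az i * Z).mulVec (tens ψ (e n))) (n, t)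

/-- Branch of |f_{ij}⟩ with control |1⟩: t ↦ ∑_n 𝟙⊗⟨n| applied to Z(B_j⊗A_i)|n⟩|ψ⟩. -/
def fv2 (Z : Matrix (Fin 2 × Fin 2) (Fin 2 × Fin 2) ℂ) (i j : Fin 2)
    (ψ : Fin 2 → ℂ) : Fin 2 → ℂ :=
  fun t => ∑ n : Fin 2, ((Z * (Az j ⊗ₖ Az i)).mulVec (tens (e n) ψ)) (t, n)

/-- The unnormalized final target⊗control state |f_{ij}⟩. -/
def fvec (Z : Matrix (Fin 2 × Fin 2) (Fin 2 × Fin 2) ℂ) (i j : Fin 2)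
    (ψ : Fin 2 → ℂ) : Fin 2 × Fin 2 → ℂ :=
  fun p => if p.2 = 0 then fv1 Z i j ψ p.1 else fv2 Z i j ψ p.1

lemma hs2 : (((Real.sqrt 2 : ℝ) : ℂ))⁻¹ * (((Real.sqrt 2 : ℝ) : ℂ))⁻¹ = 2⁻¹ := by
  rw [← mul_inv]; norm_cast; rw [Real.mul_self_sqrt] <;> norm_num

lemma fv1_eval (r : Fin 4 → ℂ) (ψ : Fin 2 → ℂ) (i j t : Fin 2) :
    fv1 (∑ μ : Fin 4, r μ • (σ μ ⊗ₖ σ μ)) i j ψ t =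
      if t = i then (if i = j then (r 0 + r 3) else (r 1 + r 2)) / 2 * ψ i else 0 := by
  fin_cases i <;> fin_cases j <;> fin_cases t <;>
  · simp [fv1, Az, K, proj, σ, σx, σy, σz, e, tens, Matrix.mulVec, dotProduct,
      Matrix.mul_apply, Matrix.kroneckerMap_apply, Fintype.sum_prod_type,
      Fin.sum_univ_four, Fin.sum_univ_two, Matrix.sum_apply, Matrix.smul_apply,
      Matrix.vecMulVec_apply, Matrix.one_apply, Pi.single_apply, Prod.ext_iff, hs2] <;>
    first
      | ring1
      | (left; ring1)

lemma fv2_eval (r : Fin 4 → ℂ) (ψ : Fin 2 → ℂ) (i j t : Fin 2) :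
    fv2 (∑ μ : Fin 4, r μ • (σ μ ⊗ₖ σ μ)) i j ψ t =
      if t = i then (if i = j then (r 0 + r 3) else (r 1 + r 2)) / 2 * ψ i else 0 := by
  fin_cases i <;> fin_cases j <;> fin_cases t <;>
  · simp [fv2, Az, K, proj, σ, σx, σy, σz, e, tens, Matrix.mulVec, dotProduct,
      Matrix.mul_apply, Matrix.kroneckerMap_apply, Fintype.sum_prod_type,
      Fin.sum_univ_four, Fin.sum_univ_two, Matrix.sum_apply, Matrix.smul_apply,
      Matrix.vecMulVec_apply, Matrix.one_apply, Pi.single_apply, Prod.ext_iff, hs2] <;>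
    first
      | ring1
      | (left; ring1)

/-- for Z = ∑ r^μ σ_μ⊗σ_μ, the joint probability ⟨f_{ij}|f_{ij}⟩ equals
(|⟨i|ψ⟩|²/2)(|r⁰+r³|²δ_{ij} + |r¹+r²|²δ_{ij̄}). -/
theorem stmt17 (r : Fin 4 → ℂ) (Z : Matrix (Fin 2 × Fin 2) (Fin 2 × Fin 2) ℂ)
    (hZ : Z = ∑ μ : Fin 4, r μ • (σ μ ⊗ₖ σ μ))
    (i j : Fin 2) (ψ : Fin 2 → ℂ) (hψ : star ψ ⬝ᵥ ψ = 1) :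
    ∑ p : Fin 2 × Fin 2, ‖fvec Z i j ψ p‖^2 =
      (‖ψ i‖^2 / 2) *
        ((if i = j then ‖r 0 + r 3‖^2 else 0) +
         (if i = j then 0 else ‖r 1 + r 2‖^2)) := by
  subst hZ
  fin_cases i <;> fin_cases j <;>
  · simp [fvec, Fintype.sum_prod_type, Fin.sum_univ_two, fv1_eval, fv2_eval,
      norm_mul, norm_div]
    ring
end
end
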